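/- arXiv:2604.16668 — 4 statements merged into one kernel-verified Lean document; each statement's English description precedes it below -/
import Mathlib

section
/- Source cancellation in the incremental network equations: suppose the fault-time network equation Y ⬝ (v_F, v_J, v_C, v_S) = (−Y_F ⬝ v_F, −Y_J ⬝ v_J, i_C + Y_C ⬝ v_C, i_S) and the prefault network equation Y ⬝ (v_F', v_J', v_C', v_S') = (0, −Y_J ⬝ v_J', i_C' + Y_C ⬝ v_C', i_S') both hold, and that v_S = v_S' and i_C = i_C'. Then the incremental quantities satisfy Y ⬝ (ṽ_F, ṽ_J, ṽ_C, 0) = (−Y_F ⬝ v_F, −Y_J ⬝ ṽ_J, Y_C ⬝ ṽ_C, ĩ_S); in particular, all source variables (v_S, v_S', i_C, i_C') have canceled out of the equation. -/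
open Matrix

/-- Assemble a vector on `ι = nF ⊕ nJ ⊕ nC ⊕ nS` from its four blocks. -/
def blockVec {nF nJ nC nS : Type*} (xF : nF → ℂ) (xJ : nJ → ℂ) (xC : nC → ℂ)
    (xS : nS → ℂ) : nF ⊕ nJ ⊕ nC ⊕ nS → ℂ :=
  Sum.elim xF (Sum.elim xJ (Sum.elim xC xS))

/-- **Source cancellation in the incremental network equations.**
If the fault-time and prefault network equations hold and the sources are
periodic (`v_S = v_S'`, `i_C = i_C'`), then the incremental quantities satisfy
`Y ⬝ (ṽ_F, ṽ_J, ṽ_C, 0) = (−Y_F ⬝ v_F, −Y_J ⬝ ṽ_J, Y_C ⬝ ṽ_C, ĩ_S)`: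
all source variables have canceled out. -/
theorem incremental_source_cancellation
    {nF nJ nC nS : Type*} [Fintype nF] [Fintype nJ] [Fintype nC] [Fintype nS]
    (Y : Matrix (nF ⊕ nJ ⊕ nC ⊕ nS) (nF ⊕ nJ ⊕ nC ⊕ nS) ℂ)
    (YF : Matrix nF nF ℂ) (YJ : Matrix nJ nJ ℂ) (YC : Matrix nC nC ℂ)
    (vF vF' : nF → ℂ) (vJ vJ' : nJ → ℂ) (vC vC' : nC → ℂ) (vS vS' : nS → ℂ)
    (iC iC' : nC → ℂ) (iS iS' : nS → ℂ)
    (hfault : Y *ᵥ blockVec vF vJ vC vS =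
      blockVec (-(YF *ᵥ vF)) (-(YJ *ᵥ vJ)) (iC + YC *ᵥ vC) iS)
    (hpre : Y *ᵥ blockVec vF' vJ' vC' vS' =
      blockVec 0 (-(YJ *ᵥ vJ')) (iC' + YC *ᵥ vC') iS')
    (hvS : vS = vS') (hiC : iC = iC') :
    Y *ᵥ blockVec (vF - vF') (vJ - vJ') (vC - vC') 0 =
      blockVec (-(YF *ᵥ vF)) (-(YJ *ᵥ (vJ - vJ'))) (YC *ᵥ (vC - vC')) (iS - iS') := by
  have hsub : blockVec (vF - vF') (vJ - vJ') (vC - vC') (0 : nS → ℂ) =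
      blockVec vF vJ vC vS - blockVec vF' vJ' vC' vS' := by
    funext x
    rcases x with x | x | x | x <;>
      simp [blockVec, hvS]
  rw [hsub, mulVec_sub, hfault, hpre]
  funext x
  rcases x with x | x | x | x <;>
    simp [blockVec, hiC, mulVec_sub] <;> ring
end

section
/- Rearranged incremental network equation: suppose the fault-time network equation Y ⬝ (v_F, v_J, v_C, v_S) = (−Y_F ⬝ v_F, −Y_J ⬝ v_J, i_C + Y_C ⬝ v_C, i_S) and the prefault network equation Y ⬝ (v_F', v_J', v_C', v_S') = (0, −Y_J ⬝ v_J', i_C' + Y_C ⬝ v_C', i_S') both hold, and that v_S = v_S' and i_C = i_C'. Then the vector x = (ṽ_F, ṽ_J, ṽ_C, ĩ_S) ∈ (ι → ℂ) satisfies Y_LHS ⬝ x = Y_RHS ⬝ v_F'; i.e., the unknown incremental voltages at non-SG buses together with the unknown incremental SG currents solve a linear system whose right-hand side depends only on the prefault fault-bus voltage v_F(t−δ). -/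
open Matrix

/-- The correction matrix `B`: `Y_F` in the (F,F) block, `Y_J` in the (J,J)
block, `−Y_C` in the (C,C) block, the S block-column equal to `−I_S − Y_{·,S}`
(where `I_S` has the identity in the S rows and zeros elsewhere and `Y_{·,S}`
is the S block-column of `Y`), and zeros in all other blocks.  Then
`Y_LHS = Y + B`. -/
def Bmat {nF nJ nC nS : Type*}
    [DecidableEq nF] [DecidableEq nJ] [DecidableEq nC] [DecidableEq nS]
    (Y : Matrix (nF ⊕ nJ ⊕ nC ⊕ nS) (nF ⊕ nJ ⊕ nC ⊕ nS) ℂ)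
    (YF : Matrix nF nF ℂ) (YJ : Matrix nJ nJ ℂ) (YC : Matrix nC nC ℂ) :
    Matrix (nF ⊕ nJ ⊕ nC ⊕ nS) (nF ⊕ nJ ⊕ nC ⊕ nS) ℂ :=
  Matrix.of fun r c =>
    match r, c with
    | r', Sum.inr (Sum.inr (Sum.inr s)) =>
        -(if r' = Sum.inr (Sum.inr (Sum.inr s)) then 1 else 0)
          - Y r' (Sum.inr (Sum.inr (Sum.inr s)))
    | Sum.inl i, Sum.inl j => YF i j
    | Sum.inr (Sum.inl i), Sum.inr (Sum.inl j) => YJ i j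
    | Sum.inr (Sum.inr (Sum.inl i)), Sum.inr (Sum.inr (Sum.inl j)) => -YC i j
    | _, _ => 0

/-- The right-hand-side matrix `Y_RHS`: `−Y_F` in the F rows, zeros elsewhere. -/
def YRHSmat {nF nJ nC nS : Type*} (YF : Matrix nF nF ℂ) :
    Matrix (nF ⊕ nJ ⊕ nC ⊕ nS) nF ℂ :=
  Matrix.of fun r j =>
    match r with
    | Sum.inl i => -YF i j
    | _ => 0

/-- **Rearranged incremental network equation.**
If the fault-time and prefault network equations hold and the sources are
periodic (`v_S = v_S'`, `i_C = i_C'`), then the vector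
`x = (ṽ_F, ṽ_J, ṽ_C, ĩ_S)` of incremental non-SG voltages and SG currents
satisfies `Y_LHS ⬝ x = Y_RHS ⬝ v_F'`, a linear system whose right-hand side
depends only on the prefault fault-bus voltage. -/
theorem incremental_linear_system
    {nF nJ nC nS : Type*} [Fintype nF] [Fintype nJ] [Fintype nC] [Fintype nS]
    [DecidableEq nF] [DecidableEq nJ] [DecidableEq nC] [DecidableEq nS]
    (Y : Matrix (nF ⊕ nJ ⊕ nC ⊕ nS) (nF ⊕ nJ ⊕ nC ⊕ nS) ℂ)
    (YF : Matrix nF nF ℂ) (YJ : Matrix nJ nJ ℂ) (YC : Matrix nC nC ℂ)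
    (vF vF' : nF → ℂ) (vJ vJ' : nJ → ℂ) (vC vC' : nC → ℂ) (vS vS' : nS → ℂ)
    (iC iC' : nC → ℂ) (iS iS' : nS → ℂ)
    (hfault : Y *ᵥ blockVec vF vJ vC vS =
      blockVec (-(YF *ᵥ vF)) (-(YJ *ᵥ vJ)) (iC + YC *ᵥ vC) iS)
    (hpre : Y *ᵥ blockVec vF' vJ' vC' vS' =
      blockVec 0 (-(YJ *ᵥ vJ')) (iC' + YC *ᵥ vC') iS')
    (hvS : vS = vS') (hiC : iC = iC') :
    (Y + Bmat Y YF YJ YC) *ᵥ blockVec (vF - vF') (vJ - vJ') (vC - vC') (iS - iS') =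
      YRHSmat YF *ᵥ vF' := by
  subst hvS hiC
  funext r
  have h1 := congr_fun hfault r
  have h2 := congr_fun hpre r
  rcases r with i | j | k | s <;>
  · simp only [mulVec, dotProduct, blockVec, Bmat, YRHSmat, Matrix.add_apply, Matrix.of_apply,
      Fintype.sum_sum_type, Sum.elim_inl, Sum.elim_inr, Pi.add_apply, Pi.sub_apply, Pi.neg_apply,
      Pi.zero_apply, Sum.inr.injEq, Sum.inl.injEq, reduceCtorEq, if_false, Finset.sum_ite_eq,
      Finset.mem_univ, if_true, mul_sub, sub_mul, add_mul, neg_mul, one_mul, zero_mul,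
      Finset.sum_sub_distrib, Finset.sum_add_distrib, Finset.sum_neg_distrib, ite_mul,
      Finset.sum_const_zero, neg_zero] at h1 h2 ⊢
    linear_combination h1 - h2
end

section
/- Operating-point independence of incremental quantities: suppose the fault-time network equation Y ⬝ (v_F, v_J, v_C, v_S) = (−Y_F ⬝ v_F, −Y_J ⬝ v_J, i_C + Y_C ⬝ v_C, i_S) and the prefault network equation Y ⬝ (v_F', v_J', v_C', v_S') = (0, −Y_J ⬝ v_J', i_C' + Y_C ⬝ v_C', i_S') both hold, that v_S = v_S' and i_C = i_C', and that the matrix Y_LHS is invertible. Then the vector x = (ṽ_F, ṽ_J, ṽ_C, ĩ_S) of incremental quantities equals Y_LHS⁻¹ ⬝ Y_RHS ⬝ v_F'; in particular, x is uniquely determined by the prefault fault-bus voltage v_F(t−δ) and the matrices Y, Y_F, Y_J, Y_C, and does not otherwise depend on the network's fault-time or prefault operating point. -/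
open Matrix

/-!
Subtracting the prefault network equation from the fault-time one, with `v_S = v_S'` and
`i_C = i_C'`, gives `Y` applied to `(ṽ_F, ṽ_J, ṽ_C, 0)` in terms of `v_F`, `ṽ_J`, `ṽ_C` and `ĩ_S`.
The diagonal blocks of `B` move the Norton terms to the left, and its `S` column replaces the
`S` column of `Y` by `-I_S`, so that the `S` slot of the unknown carries `ĩ_S`; what is left on
the right is `-Y_F v_F'`, i.e. `Y_RHS v_F'`.
-/

section blockVec

variable {nF nJ nC nS : Type*}

@[simp]
lemma blockVec_add (a a' : nF → ℂ) (b b' : nJ → ℂ) (c c' : nC → ℂ) (d d' : nS → ℂ) :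
    blockVec a b c d + blockVec a' b' c' d' = blockVec (a + a') (b + b') (c + c') (d + d') := by
  ext (_ | _ | _ | _) <;> rfl

@[simp]
lemma blockVec_sub (a a' : nF → ℂ) (b b' : nJ → ℂ) (c c' : nC → ℂ) (d d' : nS → ℂ) :
    blockVec a b c d - blockVec a' b' c' d' = blockVec (a - a') (b - b') (c - c') (d - d') := by
  ext (_ | _ | _ | _) <;> rfl

lemma blockVec_eq_add_blockVec_zero (a : nF → ℂ) (b : nJ → ℂ) (c : nC → ℂ) (d : nS → ℂ) :
    blockVec a b c d = blockVec a b c 0 + blockVec 0 0 0 d := by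
  simp

lemma YRHSmat_mulVec [Fintype nF] (YF : Matrix nF nF ℂ) (v : nF → ℂ) :
    YRHSmat (nJ := nJ) (nC := nC) (nS := nS) YF *ᵥ v = blockVec (-(YF *ᵥ v)) 0 0 0 := by
  ext (i | i | i | i) <;> simp [YRHSmat, blockVec, mulVec, dotProduct]

variable [Fintype nF] [Fintype nJ] [Fintype nC] [Fintype nS]

lemma mulVec_blockVec_apply {m : Type*} (M : Matrix m (nF ⊕ nJ ⊕ nC ⊕ nS) ℂ)
    (a : nF → ℂ) (b : nJ → ℂ) (c : nC → ℂ) (d : nS → ℂ) (r : m) :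
    (M *ᵥ blockVec a b c d) r =
      (∑ i, M r (.inl i) * a i) + (∑ i, M r (.inr (.inl i)) * b i) +
        (∑ i, M r (.inr (.inr (.inl i))) * c i) + ∑ i, M r (.inr (.inr (.inr i))) * d i := by
  simp [mulVec, dotProduct, Fintype.sum_sum_type, blockVec, add_assoc]

end blockVec

section Bmat

variable {nF nJ nC nS : Type*}
  [DecidableEq nF] [DecidableEq nJ] [DecidableEq nC] [DecidableEq nS]
  (Y : Matrix (nF ⊕ nJ ⊕ nC ⊕ nS) (nF ⊕ nJ ⊕ nC ⊕ nS) ℂ)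
  (YF : Matrix nF nF ℂ) (YJ : Matrix nJ nJ ℂ) (YC : Matrix nC nC ℂ)

lemma add_Bmat_apply_inr_inr_inr (r : nF ⊕ nJ ⊕ nC ⊕ nS) (s : nS) :
    (Y + Bmat Y YF YJ YC) r (.inr (.inr (.inr s))) =
      -(if r = .inr (.inr (.inr s)) then 1 else 0) := by
  simp [Bmat]

variable [Fintype nF] [Fintype nJ] [Fintype nC] [Fintype nS]

lemma Bmat_mulVec_blockVec_zero (a : nF → ℂ) (b : nJ → ℂ) (c : nC → ℂ) :
    Bmat Y YF YJ YC *ᵥ blockVec a b c 0 = blockVec (YF *ᵥ a) (YJ *ᵥ b) (-(YC *ᵥ c)) 0 := by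
  ext (i | i | i | i) <;> simp [Bmat, blockVec, mulVec, dotProduct]

lemma add_Bmat_mulVec_blockVec_zero_zero_zero (d : nS → ℂ) :
    (Y + Bmat Y YF YJ YC) *ᵥ blockVec 0 0 0 d = blockVec 0 0 0 (-d) := by
  ext r
  rw [mulVec_blockVec_apply]
  simp only [add_Bmat_apply_inr_inr_inr]
  rcases r with (i | i | i | i) <;> simp [blockVec]

end Bmat

/-- **Operating-point independence of incremental quantities.**
If the fault-time and prefault network equations hold, the sources are periodic
(`v_S = v_S'`, `i_C = i_C'`), and `Y_LHS = Y + B` is invertible, then the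
vector `x = (ṽ_F, ṽ_J, ṽ_C, ĩ_S)` of incremental quantities equals
`Y_LHS⁻¹ ⬝ Y_RHS ⬝ v_F'`: it is uniquely determined by the prefault fault-bus
voltage and the network matrices, independently of the operating point. -/
theorem incremental_operating_point_independence
    {nF nJ nC nS : Type*} [Fintype nF] [Fintype nJ] [Fintype nC] [Fintype nS]
    [DecidableEq nF] [DecidableEq nJ] [DecidableEq nC] [DecidableEq nS]
    (Y : Matrix (nF ⊕ nJ ⊕ nC ⊕ nS) (nF ⊕ nJ ⊕ nC ⊕ nS) ℂ)
    (YF : Matrix nF nF ℂ) (YJ : Matrix nJ nJ ℂ) (YC : Matrix nC nC ℂ)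
    (vF vF' : nF → ℂ) (vJ vJ' : nJ → ℂ) (vC vC' : nC → ℂ) (vS vS' : nS → ℂ)
    (iC iC' : nC → ℂ) (iS iS' : nS → ℂ)
    (hfault : Y *ᵥ blockVec vF vJ vC vS =
      blockVec (-(YF *ᵥ vF)) (-(YJ *ᵥ vJ)) (iC + YC *ᵥ vC) iS)
    (hpre : Y *ᵥ blockVec vF' vJ' vC' vS' =
      blockVec 0 (-(YJ *ᵥ vJ')) (iC' + YC *ᵥ vC') iS')
    (hvS : vS = vS') (hiC : iC = iC')
    (hinv : IsUnit (Y + Bmat Y YF YJ YC)) :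
    blockVec (vF - vF') (vJ - vJ') (vC - vC') (iS - iS') =
      (Y + Bmat Y YF YJ YC)⁻¹ *ᵥ (YRHSmat YF *ᵥ vF') := by
  subst hvS hiC
  have hY : Y *ᵥ blockVec (vF - vF') (vJ - vJ') (vC - vC') 0 =
      blockVec (-(YF *ᵥ vF)) (-(YJ *ᵥ (vJ - vJ'))) (YC *ᵥ (vC - vC')) (iS - iS') := by
    rw [← sub_self vS, ← blockVec_sub, mulVec_sub, hfault, hpre, blockVec_sub]
    congr 1 <;> simp only [mulVec_sub, sub_zero] <;> abel
  have hx : (Y + Bmat Y YF YJ YC) *ᵥ blockVec (vF - vF') (vJ - vJ') (vC - vC') (iS - iS') =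
      YRHSmat YF *ᵥ vF' := by
    rw [blockVec_eq_add_blockVec_zero, mulVec_add, add_Bmat_mulVec_blockVec_zero_zero_zero,
      add_mulVec, hY, Bmat_mulVec_blockVec_zero, YRHSmat_mulVec, blockVec_add, blockVec_add]
    congr 1 <;> simp only [mulVec_sub, add_zero] <;> abel
  let := hinv.invertible
  exact (inv_mulVec_eq_vec hx.symm).symm
end

section
/- Apparent impedance for the phase a-to-phase b fault loop: let v_La, v_Lb, i_La, i_Lb, i_Ra, i_Rb ∈ ℂ be fault-time quantities and primed symbols their prefault values. Let m_T, m_F, r_F be real and z ∈ ℂ. Suppose fault-loop KVL holds: v_La − v_Lb = m_T·z·(i_La − i_Lb) + m_F·r_F·i_F, where i_F = i_La + i_Ra = −(i_Lb + i_Rb); suppose the prefault fault current is zero on both phases (i_La' + i_Ra' = 0 and i_Lb' + i_Rb' = 0); and suppose the apparent current i_A := i_La − i_Lb ≠ 0. Then (v_La − v_Lb) / i_A = m_T·z + (m_F·r_F/2) · ( ((i_La − i_La') − (i_Lb − i_Lb')) + ((i_Ra − i_Ra') − (i_Rb − i_Rb')) ) / i_A; i.e., the apparent impedance equals m_T·z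 plus half the fault resistance times the sum of the incremental apparent local and incremental apparent remote currents, divided by the apparent current. -/
/-!
The fault current is carried by the two phases in opposite directions, so twice it equals the
apparent local plus the apparent remote current. Since no fault current flows before the fault,
the prefault apparent currents cancel and the incremental sum is this same quantity. Dividing
the loop KVL by the apparent current gives the formula.
-/

theorem two_mul_eq_sub_add_sub_of_eq_add_of_eq_neg_add {R : Type*} [CommRing R]
    {iF iLa iLb iRa iRb : R} (hFa : iF = iLa + iRa) (hFb : iF = -(iLb + iRb)) :
    2 * iF = (iLa - iLb) + (iRa - iRb) := by
  linear_combination hFa + hFb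

theorem incremental_sum_eq_of_prefault_eq_zero {G : Type*} [AddCommGroup G]
    {iLa iLb iRa iRb iLa' iLb' iRa' iRb' : G} (hpa : iLa' + iRa' = 0) (hpb : iLb' + iRb' = 0) :
    ((iLa - iLa') - (iLb - iLb')) + ((iRa - iRa') - (iRb - iRb')) =
      (iLa - iLb) + (iRa - iRb) := by
  rw [← sub_eq_zero]
  calc _ = iLb' + iRb' - (iLa' + iRa') := by abel
    _ = 0 := by rw [hpa, hpb, sub_zero]

theorem div_eq_add_div_of_eq_mul_add {K : Type*} [Field K] {v iA Z e : K} (hA : iA ≠ 0)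
    (hv : v = Z * iA + e) :
    v / iA = Z + e / iA := by
  rw [hv, add_div, mul_div_cancel_right₀ Z hA]

/-- **Apparent impedance for the phase a-to-phase b fault loop.**
Under the fault-loop KVL, zero prefault fault current on both phases, and
nonzero apparent current, the apparent impedance equals `m_T·z` plus half the
fault resistance times the sum of the incremental apparent local and
incremental apparent remote currents, divided by the apparent current. -/
theorem apparent_impedance_ab
    (v_La v_Lb i_La i_Lb i_Ra i_Rb i_La' i_Lb' i_Ra' i_Rb' i_F : ℂ)
    (m_T m_F r_F : ℝ) (z : ℂ)
    (hKVL : v_La - v_Lb = (m_T : ℂ) * z * (i_La - i_Lb) + (m_F : ℂ) * (r_F : ℂ) * i_F)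
    (hFa : i_F = i_La + i_Ra)
    (hFb : i_F = -(i_Lb + i_Rb))
    (hpa : i_La' + i_Ra' = 0)
    (hpb : i_Lb' + i_Rb' = 0)
    (hA : i_La - i_Lb ≠ 0) :
    (v_La - v_Lb) / (i_La - i_Lb) =
      (m_T : ℂ) * z + ((m_F : ℂ) * (r_F : ℂ) / 2) *
        (((i_La - i_La') - (i_Lb - i_Lb')) + ((i_Ra - i_Ra') - (i_Rb - i_Rb')))
        / (i_La - i_Lb) := by
  rw [incremental_sum_eq_of_prefault_eq_zero hpa hpb,
    ← two_mul_eq_sub_add_sub_of_eq_add_of_eq_neg_add hFa hFb,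
    div_mul_eq_mul_div, mul_left_comm, mul_div_cancel_left₀ _ two_ne_zero]
  exact div_eq_add_div_of_eq_mul_add hA hKVL
end
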